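/- Rockafellar–Uryasev equivalence of minimizations (Theorem 2.3): let R be an integrable ℝ^K-valued random vector, γ ∈ (0,1), and W := { u ∈ ℝ^K : u_i ≥ 0 for all i and Σ_i u_i = 1 } the simplex of long-only portfolios. Then inf_{u ∈ W} CVaR_γ(uᵀR) = inf_{(u,α) ∈ W × ℝ} F_γ(u, α); moreover a pair (u*, α*) minimizes F_γ over W × ℝ if and only if u* minimizes CVaR_γ(uᵀR) over W and α* minimizes α ↦ F_γ(u*, α) over ℝ. -/

import Mathlib

/-!
`VaR_β(X)` is the `β`-quantile `q(β)` of the loss `L = -X`, and `q` pushes Lebesgue measure on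
`(0, 1)` forward to the law of `L`, so `E[(L - α)⁺] = ∫₀¹ (q(β) - α)⁺ dβ`. Hence
`(1 - γ) CVaR_γ(X) = ∫_γ^1 q ≤ ∫_γ^1 (q - α)⁺ + (1 - γ) α ≤ E[(L - α)⁺] + (1 - γ) α`, with
equality at `α = q(γ)` because `q` is monotone. Thus `CVaR_γ(uᵀR) = min_α F_γ(u, α)`, the minimum
being attained, and both claims follow formally from this.
-/

open MeasureTheory

/-- Value-at-risk of the return `X` at confidence level `β`:
`VaR_β(X) = inf {x ∈ ℝ : ℙ(x + X < 0) ≤ 1 - β}`. -/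
noncomputable def VaR {Ω : Type*} [MeasurableSpace Ω] (P : Measure Ω) (X : Ω → ℝ) (β : ℝ) : ℝ :=
  sInf {x : ℝ | (P {ω | x + X ω < 0}).toReal ≤ 1 - β}

/-- Conditional value-at-risk of the return `X` at confidence level `γ`:
`CVaR_γ(X) = (1/(1-γ)) ∫_γ^1 VaR_β(X) dβ`. -/
noncomputable def CVaR {Ω : Type*} [MeasurableSpace Ω] (P : Measure Ω) (X : Ω → ℝ) (γ : ℝ) : ℝ :=
  (1 / (1 - γ)) * ∫ β in γ..1, VaR P X β

open Set Filter Topology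

section MonotoneIntegral

variable {q : ℝ → ℝ} {γ : ℝ}

lemma IntervalIntegrable.max_sub_const_zero {a b : ℝ} {μ : Measure ℝ} [IsLocallyFiniteMeasure μ]
    (hq : IntervalIntegrable q μ a b) (α : ℝ) :
    IntervalIntegrable (fun β => max (q β - α) 0) μ a b :=
  have h := hq.sub (intervalIntegrable_const (c := α))
  ⟨h.1.pos_part, h.2.pos_part⟩

lemma integral_le_mul_add_integral_max (hγ : γ ∈ Icc (0 : ℝ) 1)
    (hq : IntervalIntegrable q volume 0 1) (α : ℝ) :
    ∫ β in γ..1, q β ≤ (1 - γ) * α + ∫ β in (0 : ℝ)..1, max (q β - α) 0 := by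
  have hsub : uIcc γ 1 ⊆ uIcc 0 1 :=
    uIcc_subset_uIcc (by rwa [uIcc_of_le zero_le_one]) right_mem_uIcc
  have hqγ : IntervalIntegrable q volume γ 1 := hq.mono_set hsub
  have hmax := hq.max_sub_const_zero α
  calc ∫ β in γ..1, q β = (∫ β in γ..1, (q β - α)) + (1 - γ) * α := by
        simp [intervalIntegral.integral_sub hqγ intervalIntegrable_const]
    _ ≤ (∫ β in γ..1, max (q β - α) 0) + (1 - γ) * α := by
        gcongr ?_ + _
        exact intervalIntegral.integral_mono_on hγ.2 (hqγ.sub intervalIntegrable_const)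
          (hmax.mono_set hsub) fun β _ => le_max_left _ _
    _ ≤ (1 - γ) * α + ∫ β in (0 : ℝ)..1, max (q β - α) 0 := by
        rw [add_comm]
        gcongr _ + ?_
        exact intervalIntegral.integral_mono_interval hγ.1 hγ.2 le_rfl
          (Eventually.of_forall fun β => le_max_right _ _) hmax

lemma integral_eq_mul_add_integral_max (hγ : γ ∈ Ioo (0 : ℝ) 1) (hmono : MonotoneOn q (Ioo 0 1))
    (hq : IntervalIntegrable q volume 0 1) :
    ∫ β in γ..1, q β = (1 - γ) * q γ + ∫ β in (0 : ℝ)..1, max (q β - q γ) 0 := by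
  have hγ01 : γ ∈ uIcc 0 1 := by rw [uIcc_of_le zero_le_one]; exact Ioo_subset_Icc_self hγ
  have hmax := hq.max_sub_const_zero (q γ)
  have hlow : ∫ β in (0 : ℝ)..γ, max (q β - q γ) 0 = 0 := by
    refine (intervalIntegral.integral_congr_Ioo_of_le hγ.1.le fun β hβ => ?_).trans
      intervalIntegral.integral_zero
    exact max_eq_right (sub_nonpos.2 (hmono ⟨hβ.1, hβ.2.trans hγ.2⟩ hγ hβ.2.le))
  have hhigh : ∫ β in γ..1, max (q β - q γ) 0 = ∫ β in γ..1, (q β - q γ) :=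
    intervalIntegral.integral_congr_Ioo_of_le hγ.2.le fun β hβ =>
      max_eq_left (sub_nonneg.2 (hmono hγ ⟨hγ.1.trans hβ.1, hβ.2⟩ hβ.1.le))
  rw [← intervalIntegral.integral_add_adjacent_intervals
      (hmax.mono_set (uIcc_subset_uIcc left_mem_uIcc hγ01))
      (hmax.mono_set (uIcc_subset_uIcc hγ01 right_mem_uIcc)), hlow, hhigh,
    intervalIntegral.integral_sub (hq.mono_set (uIcc_subset_uIcc hγ01 right_mem_uIcc))
      intervalIntegrable_const]
  simp

end MonotoneIntegral

namespace ProbabilityTheory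

/-- Meaningful only for `β ∈ (0, 1)`: for `β ≤ 0` the set is unbounded below and `sInf` is `0`. -/
noncomputable def quantile (μ : Measure ℝ) (β : ℝ) : ℝ :=
  sInf {x | β ≤ cdf μ x}

variable {μ : Measure ℝ}

lemma quantile_le_iff {β : ℝ} (hβ : β ∈ Ioo 0 1) (x : ℝ) :
    quantile μ β ≤ x ↔ β ≤ cdf μ x := by
  have hne : {y | β ≤ cdf μ y}.Nonempty :=
    ((tendsto_cdf_atTop μ).eventually (eventually_ge_nhds hβ.2)).exists
  have hbdd : BddBelow {y | β ≤ cdf μ y} := by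
    obtain ⟨y₀, hy₀⟩ := ((tendsto_cdf_atBot μ).eventually (eventually_lt_nhds hβ.1)).exists
    exact ⟨y₀, fun y hy => ((monotone_cdf μ).reflect_lt (hy₀.trans_le hy)).le⟩
  refine ⟨fun h => ?_, fun h => csInf_le hbdd h⟩
  refine ge_of_tendsto (((cdf μ).right_continuous x).mono Ioi_subset_Ici_self) ?_
  filter_upwards [self_mem_nhdsWithin] with y (hy : x < y)
  obtain ⟨z, hz, hzy⟩ := exists_lt_of_csInf_lt hne (h.trans_lt hy)
  exact hz.trans (monotone_cdf μ hzy.le)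

lemma le_cdf_quantile {β : ℝ} (hβ : β ∈ Ioo 0 1) : β ≤ cdf μ (quantile μ β) :=
  (quantile_le_iff hβ _).1 le_rfl

lemma monotoneOn_quantile : MonotoneOn (quantile μ) (Ioo 0 1) := fun _ hβ _ hβ' hle =>
  (quantile_le_iff hβ _).2 (hle.trans (le_cdf_quantile hβ'))

lemma volume_Ioo_zero_one_inter_Iic {c : ℝ} (hc : c ≤ 1) :
    volume (Ioo (0 : ℝ) 1 ∩ Iic c) = ENNReal.ofReal c := by
  refine le_antisymm ?_ ?_
  · calc volume (Ioo (0 : ℝ) 1 ∩ Iic c) ≤ volume (Ioc 0 c) :=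
          measure_mono fun β hβ => ⟨hβ.1.1, hβ.2⟩
      _ = ENNReal.ofReal c := by simp
  · calc ENNReal.ofReal c = volume (Ioo 0 c) := by simp
      _ ≤ volume (Ioo (0 : ℝ) 1 ∩ Iic c) :=
          measure_mono fun β hβ => ⟨⟨hβ.1, hβ.2.trans_le hc⟩, hβ.2.le⟩

lemma aemeasurable_quantile : AEMeasurable (quantile μ) (volume.restrict (Ioo 0 1)) :=
  aemeasurable_restrict_of_monotoneOn measurableSet_Ioo monotoneOn_quantile

lemma map_quantile_volume_Ioo [IsProbabilityMeasure μ] :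
    (volume.restrict (Ioo 0 1)).map (quantile μ) = μ := by
  refine Measure.ext_of_Iic _ _ fun x => ?_
  have hpre : quantile μ ⁻¹' Iic x ∩ Ioo 0 1 = Ioo 0 1 ∩ Iic (cdf μ x) := by
    ext β
    simp only [mem_inter_iff, mem_preimage, mem_Iic]
    exact ⟨fun h => ⟨h.2, (quantile_le_iff h.2 x).1 h.1⟩,
      fun h => ⟨(quantile_le_iff h.1 x).2 h.2, h.1⟩⟩
  rw [Measure.map_apply_of_aemeasurable aemeasurable_quantile measurableSet_Iic,
    Measure.restrict_apply' measurableSet_Ioo, hpre, volume_Ioo_zero_one_inter_Iic (cdf_le_one μ x),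
    ofReal_cdf]

variable [IsProbabilityMeasure μ]

lemma integral_comp_quantile {f : ℝ → ℝ} (hf : AEStronglyMeasurable f μ) :
    ∫ β in (0 : ℝ)..1, f (quantile μ β) = ∫ x, f x ∂μ := by
  rw [intervalIntegral.integral_of_le zero_le_one, integral_Ioc_eq_integral_Ioo,
    ← integral_map aemeasurable_quantile (by rwa [map_quantile_volume_Ioo]),
    map_quantile_volume_Ioo]

lemma intervalIntegrable_comp_quantile_iff {f : ℝ → ℝ} (hf : AEStronglyMeasurable f μ) :
    IntervalIntegrable (fun β => f (quantile μ β)) volume 0 1 ↔ Integrable f μ := by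
  rw [intervalIntegrable_iff_integrableOn_Ioo_of_le zero_le_one, IntegrableOn,
    ← Function.comp_def,
    ← integrable_map_measure (by rwa [map_quantile_volume_Ioo]) aemeasurable_quantile,
    map_quantile_volume_Ioo]

theorem isLeast_integral_quantile (hμ : Integrable id μ) {γ : ℝ} (hγ : γ ∈ Ioo 0 1) :
    IsLeast (range fun α => α + 1 / (1 - γ) * ∫ x, max (x - α) 0 ∂μ)
      (1 / (1 - γ) * ∫ β in γ..1, quantile μ β) := by
  have hq : IntervalIntegrable (quantile μ) volume 0 1 :=
    (intervalIntegrable_comp_quantile_iff aestronglyMeasurable_id).2 hμ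
  have hE (α : ℝ) : ∫ β in (0 : ℝ)..1, max (quantile μ β - α) 0 = ∫ x, max (x - α) 0 ∂μ :=
    integral_comp_quantile ((continuous_sub_right α).max continuous_const).aestronglyMeasurable
  have h1γ : 0 < 1 - γ := sub_pos.2 hγ.2
  refine ⟨⟨quantile μ γ, ?_⟩, ?_⟩
  · dsimp only
    rw [integral_eq_mul_add_integral_max hγ monotoneOn_quantile hq, hE]
    field_simp
  · rintro _ ⟨α, rfl⟩
    have h := integral_le_mul_add_integral_max (Ioo_subset_Icc_self hγ) hq α
    rw [hE] at h
    calc 1 / (1 - γ) * ∫ β in γ..1, quantile μ β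
        ≤ 1 / (1 - γ) * ((1 - γ) * α + ∫ x, max (x - α) 0 ∂μ) := by gcongr
      _ = α + 1 / (1 - γ) * ∫ x, max (x - α) 0 ∂μ := by field_simp

end ProbabilityTheory

open ProbabilityTheory

section RiskMeasures

variable {Ω : Type*} [MeasurableSpace Ω] {P : Measure Ω} [IsProbabilityMeasure P] {X : Ω → ℝ}

lemma VaR_eq_quantile_map_neg (hX : AEMeasurable X P) (β : ℝ) :
    VaR P X β = quantile (P.map (-X)) β := by
  have : IsProbabilityMeasure (P.map (-X)) := Measure.isProbabilityMeasure_map hX.neg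
  refine congrArg sInf (Set.ext fun x => ?_)
  have hset : {ω | x + X ω < 0} = (-X) ⁻¹' Ioi x := by
    ext ω
    simp only [mem_ofPred_eq, mem_preimage, mem_Ioi, Pi.neg_apply]
    constructor <;> intro h <;> linarith
  have hcdf : (P {ω | x + X ω < 0}).toReal = 1 - cdf (P.map (-X)) x := by
    rw [hset, ← Measure.map_apply_of_aemeasurable hX.neg measurableSet_Ioi, ← compl_Iic,
      ← measureReal_def, probReal_compl_eq_one_sub measurableSet_Iic, cdf_eq_real]
  simp only [mem_ofPred_eq, hcdf]
  constructor <;> intro h <;> linarith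

theorem isLeast_CVaR (hX : Integrable X P) {γ : ℝ} (hγ : γ ∈ Ioo 0 1) :
    IsLeast (range fun α => α + 1 / (1 - γ) * ∫ ω, max (-X ω - α) 0 ∂P) (CVaR P X γ) := by
  have hXm : AEMeasurable (-X) P := hX.aemeasurable.neg
  have : IsProbabilityMeasure (P.map (-X)) := Measure.isProbabilityMeasure_map hXm
  have hμ : Integrable id (P.map (-X)) :=
    (integrable_map_measure aestronglyMeasurable_id hXm).2 hX.neg
  have hE (α : ℝ) : ∫ ω, max (-X ω - α) 0 ∂P = ∫ x, max (x - α) 0 ∂(P.map (-X)) :=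
    (integral_map hXm ((continuous_sub_right α).max continuous_const).aestronglyMeasurable).symm
  simp only [CVaR, VaR_eq_quantile_map_neg hX.aemeasurable, hE]
  exact isLeast_integral_quantile hμ hγ

end RiskMeasures

section Minimization

variable {ι α β : Type*} {W : Set ι} {F : ι → α → β} {g : ι → β}

lemma sInf_image_eq_sInf_of_isLeast [ConditionallyCompleteLinearOrder β]
    (hg : ∀ u, IsLeast (range (F u)) (g u)) :
    sInf (g '' W) = sInf {v | ∃ u ∈ W, ∃ a, v = F u a} := by
  refine csInf_eq_csInf_of_forall_exists_le ?_ ?_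
  · rintro _ ⟨u, hu, rfl⟩
    obtain ⟨a, ha⟩ := (hg u).1
    exact ⟨g u, ⟨u, hu, a, ha.symm⟩, le_rfl⟩
  · rintro _ ⟨u, hu, a, rfl⟩
    exact ⟨g u, ⟨u, hu, rfl⟩, (hg u).2 ⟨a, rfl⟩⟩

lemma forall_le_iff_of_isLeast [Preorder β] (hg : ∀ u, IsLeast (range (F u)) (g u)) {u₀ : ι}
    (hu₀ : u₀ ∈ W) (a₀ : α) :
    (∀ u ∈ W, ∀ a, F u₀ a₀ ≤ F u a) ↔ (∀ u ∈ W, g u₀ ≤ g u) ∧ ∀ a, F u₀ a₀ ≤ F u₀ a := by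
  constructor
  · intro h
    refine ⟨fun u hu => ?_, h u₀ hu₀⟩
    obtain ⟨a, ha⟩ := (hg u).1
    calc g u₀ ≤ F u₀ a₀ := (hg u₀).2 ⟨a₀, rfl⟩
      _ ≤ F u a := h u hu a
      _ = g u := ha
  · rintro ⟨hmin, hα⟩ u hu a
    obtain ⟨a', ha'⟩ := (hg u₀).1
    calc F u₀ a₀ ≤ F u₀ a' := hα a'
      _ = g u₀ := ha'
      _ ≤ g u := hmin u hu
      _ ≤ F u a := (hg u).2 ⟨a, rfl⟩

end Minimization

theorem RU_minimization_equivalence_general {Ω : Type*} [MeasurableSpace Ω]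
    (P : Measure Ω) [IsProbabilityMeasure P] {K : ℕ}
    (R : Ω → Fin K → ℝ) (hR : ∀ i, Integrable (fun ω => R ω i) P)
    (γ : ℝ) (hγ : γ ∈ Set.Ioo (0 : ℝ) 1)
    (W : Set (Fin K → ℝ))
    (F : (Fin K → ℝ) → ℝ → ℝ)
    (hF : F = fun u α => α + (1 / (1 - γ)) * ∫ ω, max (-(∑ i, u i * R ω i) - α) 0 ∂P) :
    sInf ((fun u => CVaR P (fun ω => ∑ i, u i * R ω i) γ) '' W)
        = sInf {v | ∃ u ∈ W, ∃ α : ℝ, v = F u α} ∧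
      ∀ ustar ∈ W, ∀ αstar : ℝ,
        ((∀ u ∈ W, ∀ α : ℝ, F ustar αstar ≤ F u α) ↔
          ((∀ u ∈ W, CVaR P (fun ω => ∑ i, ustar i * R ω i) γ
              ≤ CVaR P (fun ω => ∑ i, u i * R ω i) γ) ∧
            ∀ α : ℝ, F ustar αstar ≤ F ustar α)) := by
  have hCVaR (u : Fin K → ℝ) :
      IsLeast (range (F u)) (CVaR P (fun ω => ∑ i, u i * R ω i) γ) := by
    subst hF
    exact isLeast_CVaR (integrable_finsetSum _ fun i _ => (hR i).const_mul (u i)) hγ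
  exact ⟨sInf_image_eq_sInf_of_isLeast hCVaR, fun _ hu a => forall_le_iff_of_isLeast hCVaR hu a⟩

/-- Rockafellar–Uryasev equivalence of minimizations: over the simplex `W` of long-only
portfolios, `inf_{u ∈ W} CVaR_γ(uᵀR) = inf_{(u,α) ∈ W × ℝ} F_γ(u, α)`; moreover `(u*, α*)`
minimizes `F_γ` over `W × ℝ` iff `u*` minimizes `CVaR_γ(uᵀR)` over `W` and `α*` minimizes
`α ↦ F_γ(u*, α)` over `ℝ`. -/
theorem RU_minimization_equivalence {Ω : Type*} [MeasurableSpace Ω]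
    (P : Measure Ω) [IsProbabilityMeasure P] {K : ℕ}
    (R : Ω → Fin K → ℝ) (hR : ∀ i, Integrable (fun ω => R ω i) P)
    (γ : ℝ) (hγ : γ ∈ Set.Ioo (0 : ℝ) 1)
    (W : Set (Fin K → ℝ)) (hW : W = {u | (∀ i, 0 ≤ u i) ∧ ∑ i, u i = 1})
    (F : (Fin K → ℝ) → ℝ → ℝ)
    (hF : F = fun u α => α + (1 / (1 - γ)) * ∫ ω, max (-(∑ i, u i * R ω i) - α) 0 ∂P) :
    sInf ((fun u => CVaR P (fun ω => ∑ i, u i * R ω i) γ) '' W)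
        = sInf {v | ∃ u ∈ W, ∃ α : ℝ, v = F u α} ∧
      ∀ ustar ∈ W, ∀ αstar : ℝ,
        ((∀ u ∈ W, ∀ α : ℝ, F ustar αstar ≤ F u α) ↔
          ((∀ u ∈ W, CVaR P (fun ω => ∑ i, ustar i * R ω i) γ
              ≤ CVaR P (fun ω => ∑ i, u i * R ω i) γ) ∧
            ∀ α : ℝ, F ustar αstar ≤ F ustar α)) :=
  RU_minimization_equivalence_general P R hR γ hγ W F hF
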